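/- arXiv:2105.11177 — 2 statements merged into one kernel-verified Lean document; each statement's English description precedes it below -/
import Mathlib

section
/- Fix $h > 0$ and positive reals $\sigma_0, \sigma_1$. The function $\tilde F(p) = -p + \frac{p^{-2h}\sigma_1^{2h}}{(1-p)^{-2h}\sigma_0^{2h} + p^{-2h}\sigma_1^{2h}}$ is strictly decreasing on $(0,1)$ and has the unique root $p = \rho_1 := \sigma_1^{2h/(2h+1)}/(\sigma_0^{2h/(2h+1)} + \sigma_1^{2h/(2h+1)})$. -/
/-!
Dividing numerator and denominator by `p ^ (-c) * σ1 ^ c` (with `c = 2h`) turns the second summand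
into `(1 + k * (p / (1 - p)) ^ c)⁻¹` with `k = (σ0 / σ1) ^ c`, which is antitone in `p` because the
odds `p / (1 - p)` increase; adding the strictly decreasing `-p` gives strict monotonicity. Hence the
function has at most one root, and `ρ₁ = (1 + k ^ (1 / (c + 1)))⁻¹` is one: its odds are
`k ^ (-1 / (c + 1))`, and `k * (k ^ (-1 / (c + 1))) ^ c = k ^ (1 / (c + 1))`.
-/

open Real Set Function

noncomputable def armShare (c k p : ℝ) : ℝ := (1 + k * (p / (1 - p)) ^ c)⁻¹

lemma div_rpow_neg_add_eq_armShare {c a b p : ℝ} (ha : 0 ≤ a) (hb : 0 < b) (hp : p ∈ Ioo 0 1) :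
    p ^ (-c) * b / ((1 - p) ^ (-c) * a + p ^ (-c) * b) = armShare c (a / b) p := by
  obtain ⟨hp0, hp1⟩ := hp
  have hq : 0 < 1 - p := sub_pos.2 hp1
  have : 0 < p ^ c := rpow_pos_of_pos hp0 c
  have : 0 < (1 - p) ^ c := rpow_pos_of_pos hq c
  rw [armShare, rpow_neg hp0.le, rpow_neg hq.le, div_rpow hp0.le hq.le]
  field_simp
  ring

lemma strictMonoOn_div_one_sub : StrictMonoOn (fun p : ℝ => p / (1 - p)) (Iio 1) := by
  intro x hx y hy hxy
  rw [mem_Iio] at hx hy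
  rw [div_lt_div_iff₀ (sub_pos.2 hx) (sub_pos.2 hy)]
  nlinarith

lemma antitoneOn_armShare {c k : ℝ} (hc : 0 ≤ c) (hk : 0 ≤ k) :
    AntitoneOn (armShare c k) (Ico 0 1) := by
  intro x hx y hy hxy
  have hodds : x / (1 - x) ≤ y / (1 - y) :=
    strictMonoOn_div_one_sub.monotoneOn hx.2 hy.2 hxy
  have hx_odds : 0 ≤ x / (1 - x) := div_nonneg hx.1 (sub_nonneg.2 hx.2.le)
  apply inv_anti₀ (by positivity)
  gcongr

lemma isFixedPt_armShare {c k : ℝ} (hc : c + 1 ≠ 0) (hk : 0 < k) :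
    IsFixedPt (armShare c k) (1 + k ^ (c + 1)⁻¹)⁻¹ := by
  set r := k ^ (c + 1)⁻¹ with hr
  have hr0 : 0 < r := rpow_pos_of_pos hk _
  have hodds : (1 + r)⁻¹ / (1 - (1 + r)⁻¹) = r⁻¹ := by
    have : 1 + r ≠ 0 := by positivity
    field_simp
    simp [hr0.ne']
  have hk_eq : k = r ^ (c + 1) := by
    rw [hr, ← rpow_mul hk.le, inv_mul_cancel₀ hc, rpow_one]
  rw [IsFixedPt, armShare, hodds, inv_rpow hr0.le, hk_eq, rpow_add hr0, rpow_one]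
  field_simp

lemma rpow_div_add_rpow_eq_inv {a b : ℝ} (ha : 0 < a) (hb : 0 < b) (c : ℝ) :
    b ^ (c / (c + 1)) / (a ^ (c / (c + 1)) + b ^ (c / (c + 1))) =
      (1 + (a ^ c / b ^ c) ^ (c + 1)⁻¹)⁻¹ := by
  rw [div_rpow (rpow_nonneg ha.le _) (rpow_nonneg hb.le _), ← rpow_mul ha.le, ← rpow_mul hb.le,
    ← div_eq_mul_inv]
  have : 0 < b ^ (c / (c + 1)) := rpow_pos_of_pos hb _
  field_simp
  ring

theorem stmt_5 (h σ0 σ1 : ℝ) (hh : 0 < h) (h0 : 0 < σ0) (h1 : 0 < σ1) :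
    StrictAntiOn (fun p : ℝ => -p + p ^ (-(2*h)) * σ1 ^ (2*h) /
        ((1 - p) ^ (-(2*h)) * σ0 ^ (2*h) + p ^ (-(2*h)) * σ1 ^ (2*h))) (Set.Ioo 0 1) ∧
    ∀ p ∈ Set.Ioo (0:ℝ) 1,
      (-p + p ^ (-(2*h)) * σ1 ^ (2*h) /
          ((1 - p) ^ (-(2*h)) * σ0 ^ (2*h) + p ^ (-(2*h)) * σ1 ^ (2*h)) = 0 ↔
        p = σ1 ^ (2*h/(2*h+1)) / (σ0 ^ (2*h/(2*h+1)) + σ1 ^ (2*h/(2*h+1)))) := by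
  set k := σ0 ^ (2 * h) / σ1 ^ (2 * h)
  have hk : 0 < k := by positivity
  have hF : ∀ p ∈ Ioo (0:ℝ) 1, -p + p ^ (-(2*h)) * σ1 ^ (2*h) /
        ((1 - p) ^ (-(2*h)) * σ0 ^ (2*h) + p ^ (-(2*h)) * σ1 ^ (2*h)) =
      -p + armShare (2 * h) k p := fun p hp => by
    rw [div_rpow_neg_add_eq_armShare (rpow_nonneg h0.le _) (rpow_pos_of_pos h1 _) hp]
  have hanti : StrictAntiOn (fun p => -p + armShare (2 * h) k p) (Ioo 0 1) :=
    StrictAntiOn.add_antitone (fun _ _ _ _ hxy => neg_lt_neg hxy)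
      ((antitoneOn_armShare (by positivity) hk.le).mono Ioo_subset_Ico_self)
  set ρ := (1 + k ^ (2 * h + 1)⁻¹)⁻¹
  have hρ_mem : ρ ∈ Ioo 0 1 := by
    have : 0 < k ^ (2 * h + 1)⁻¹ := rpow_pos_of_pos hk _
    exact ⟨by positivity, inv_lt_one_of_one_lt₀ (by linarith)⟩
  have hroot : -ρ + armShare (2 * h) k ρ = 0 := by
    rw [(isFixedPt_armShare (by positivity) hk).eq, neg_add_cancel]
  refine ⟨hanti.congr fun p hp => (hF p hp).symm, fun p hp => ?_⟩
  rw [rpow_div_add_rpow_eq_inv h0 h1, hF p hp, ← hroot]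
  exact hanti.injOn.eq_iff hp hρ_mem
end

section
/- Fix $h > 0$ and a constant $I > 0$ for each of two arms $I_0, I_1 > 0$. The function $G(p) = -p + \frac{I_1^{-h} p^{-2h}}{I_1^{-h} p^{-2h} + I_0^{-h} (1-p)^{-2h}}$ on $(0,1)$ is strictly decreasing and its unique root is $p = I_1^{-h/(2h+1)}/(I_0^{-h/(2h+1)} + I_1^{-h/(2h+1)})$. -/
/-! Writing `r = p / (1 - p)`, the allocation term equals `a / (a + b r ^ s)`, which decreases in `p`
because `r` increases; adding `-p` makes `G` strictly decreasing, so `G` has at most one root.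
With `u = b ^ (1/(s+1))`, `v = a ^ (1/(s+1))` and `p = v / (u + v)`, both weighted terms
`a p ^ (-s)` and `b (1 - p) ^ (-s)` equal `v (u + v) ^ s` resp. `u (u + v) ^ s`, so the
allocation term is `v / (u + v) = p` and `p` is that root. -/

open Real Set

lemma mul_rpow_neg_div_add_mul_rpow_neg {a b s x y : ℝ} (hx : 0 < x) (hy : 0 < y) :
    a * x ^ (-s) / (a * x ^ (-s) + b * y ^ (-s)) = a / (a + b * (x / y) ^ s) := by
  have hxs : x ^ (-s) ≠ 0 := (rpow_pos_of_pos hx _).ne'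
  have hden : a * x ^ (-s) + b * y ^ (-s) = x ^ (-s) * (a + b * (x / y) ^ s) := by
    rw [div_rpow hx.le hy.le, rpow_neg hx.le, rpow_neg hy.le]
    field_simp [(rpow_pos_of_pos hx s).ne', (rpow_pos_of_pos hy s).ne']
  rw [hden, mul_comm a, mul_div_mul_left _ _ hxs]

lemma strictAntiOn_div_add_mul_odds_rpow {a b s : ℝ} (ha : 0 < a) (hb : 0 < b) (hs : 0 < s) :
    StrictAntiOn (fun p : ℝ => a / (a + b * (p / (1 - p)) ^ s)) (Ioo 0 1) := by
  rintro p ⟨hp0, hp1⟩ q ⟨-, hq1⟩ hpq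
  have hodds : p / (1 - p) < q / (1 - q) := by
    rw [div_lt_div_iff₀ (by linarith) (by linarith)]
    nlinarith
  have hpow : (p / (1 - p)) ^ s < (q / (1 - q)) ^ s :=
    rpow_lt_rpow (div_nonneg hp0.le (by linarith)) hodds hs
  have hpos : 0 < a + b * (p / (1 - p)) ^ s :=
    add_pos_of_pos_of_nonneg ha (mul_nonneg hb.le (rpow_nonneg (by positivity) _))
  exact div_lt_div_of_pos_left ha hpos (by gcongr)

theorem strictAntiOn_neg_add_allocation {a b s : ℝ} (ha : 0 < a) (hb : 0 < b) (hs : 0 < s) :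
    StrictAntiOn (fun p : ℝ => -p + a * p ^ (-s) / (a * p ^ (-s) + b * (1 - p) ^ (-s)))
      (Ioo 0 1) := by
  have hanti := strictAntiOn_div_add_mul_odds_rpow ha hb hs
  have hEq : EqOn (fun p : ℝ => -p + a / (a + b * (p / (1 - p)) ^ s))
      (fun p => -p + a * p ^ (-s) / (a * p ^ (-s) + b * (1 - p) ^ (-s))) (Ioo 0 1) := by
    rintro p ⟨hp0, hp1⟩
    simp only [mul_rpow_neg_div_add_mul_rpow_neg hp0 (sub_pos.2 hp1)]
  refine StrictAntiOn.congr (fun p hp q hq hpq => ?_) hEq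
  linarith [hanti hp hq hpq]

lemma rpow_add_one_mul_div_rpow_neg {u w s : ℝ} (hu : 0 < u) (hw : 0 < w) :
    w ^ (s + 1) * (w / u) ^ (-s) = w * u ^ s := by
  rw [div_rpow hw.le hu.le, rpow_neg hw.le, rpow_neg hu.le, rpow_add hw, rpow_one]
  field_simp [(rpow_pos_of_pos hw s).ne']

lemma allocation_eq_self_of_rpow {u v s : ℝ} (hu : 0 < u) (hv : 0 < v) :
    v ^ (s + 1) * (v / (u + v)) ^ (-s) /
        (v ^ (s + 1) * (v / (u + v)) ^ (-s) + u ^ (s + 1) * (1 - v / (u + v)) ^ (-s)) =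
      v / (u + v) := by
  have huv : 0 < u + v := add_pos hu hv
  have hcompl : 1 - v / (u + v) = u / (u + v) := by field_simp; ring
  rw [hcompl, rpow_add_one_mul_div_rpow_neg huv hv, rpow_add_one_mul_div_rpow_neg huv hu,
    ← add_mul, mul_div_mul_right _ _ (rpow_pos_of_pos huv s).ne', add_comm]

theorem neg_add_allocation_eq_zero_iff {a b s : ℝ} (ha : 0 < a) (hb : 0 < b) (hs : 0 < s)
    {p : ℝ} (hp : p ∈ Ioo (0 : ℝ) 1) :
    -p + a * p ^ (-s) / (a * p ^ (-s) + b * (1 - p) ^ (-s)) = 0 ↔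
      p = a ^ (s + 1)⁻¹ / (b ^ (s + 1)⁻¹ + a ^ (s + 1)⁻¹) := by
  set u := b ^ (s + 1)⁻¹
  set v := a ^ (s + 1)⁻¹
  have hu : 0 < u := rpow_pos_of_pos hb _
  have hv : 0 < v := rpow_pos_of_pos ha _
  have hroot : v / (u + v) ∈ Ioo (0 : ℝ) 1 :=
    ⟨div_pos hv (add_pos hu hv), (div_lt_one (add_pos hu hv)).2 (lt_add_of_pos_left v hu)⟩
  have hzero : -(v / (u + v)) + a * (v / (u + v)) ^ (-s) /
      (a * (v / (u + v)) ^ (-s) + b * (1 - v / (u + v)) ^ (-s)) = 0 := by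
    have hs1 : s + 1 ≠ 0 := by linarith
    rw [← rpow_inv_rpow ha.le hs1, ← rpow_inv_rpow hb.le hs1, allocation_eq_self_of_rpow hu hv]
    ring
  refine ⟨fun hp0 => (strictAntiOn_neg_add_allocation ha hb hs).injOn hp hroot ?_,
    fun hpeq => hpeq ▸ hzero⟩
  exact hp0.trans hzero.symm

theorem stmt_7 (h I0 I1 : ℝ) (hh : 0 < h) (h0 : 0 < I0) (h1 : 0 < I1) :
    StrictAntiOn (fun p : ℝ => -p + I1 ^ (-h) * p ^ (-(2*h)) /
        (I1 ^ (-h) * p ^ (-(2*h)) + I0 ^ (-h) * (1 - p) ^ (-(2*h)))) (Set.Ioo 0 1) ∧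
    ∀ p ∈ Set.Ioo (0:ℝ) 1,
      (-p + I1 ^ (-h) * p ^ (-(2*h)) /
          (I1 ^ (-h) * p ^ (-(2*h)) + I0 ^ (-h) * (1 - p) ^ (-(2*h))) = 0 ↔
        p = I1 ^ (-(h/(2*h+1))) / (I0 ^ (-(h/(2*h+1))) + I1 ^ (-(h/(2*h+1))))) := by
  have ha : 0 < I1 ^ (-h) := rpow_pos_of_pos h1 _
  have hb : 0 < I0 ^ (-h) := rpow_pos_of_pos h0 _
  have hs : 0 < 2 * h := by linarith
  have hexp : ∀ I : ℝ, 0 < I → (I ^ (-h)) ^ (2 * h + 1)⁻¹ = I ^ (-(h / (2 * h + 1))) := by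
    intro I hI
    rw [← rpow_mul hI.le, neg_mul, div_eq_mul_inv]
  refine ⟨strictAntiOn_neg_add_allocation ha hb hs, fun p hp => ?_⟩
  rw [neg_add_allocation_eq_zero_iff ha hb hs hp, hexp I0 h0, hexp I1 h1]
end
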